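/- Let E be the Toeplitz graph: two vertices v, w, a loop c at v, and an edge f from v to w, and let L = L_K(E) over a field K with S the two-sided ideal generated by w. Then S is the internal direct sum Lw ⊕ ⊕_{n=0}^∞ L·(wf*(c*)^n) of infinitely many simple left ideals, and S is not a direct summand of L as a left L-module. -/

import Mathlib

/-!
Write `p₀ = w, p₁ = f, p₂ = cf, …` for the paths ending at `w` and `gₙ = pₙ*` for the
generators `TsocGen`. The Cuntz–Krieger relations give `gᵢ pⱼ = δᵢⱼ w` and `w gᵢ = gᵢ`, and `Lw`
is spanned over `K` by the `pⱼ`. Everything follows from this dual family: the left ideals `L gᵢ`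
are independent (multiply on the right by `pᵢ`) and simple (if `a w ≠ 0` then `b a w = w` for some
`b`), and `⨆ L gᵢ` is closed under right multiplication by the generators, so it is `S`. Each
element of `S` is killed on the right by all but finitely many `pⱼ`. If `S ⊕ T = L`, then
`1 = s + t` makes `s ∈ S` a right unit for `S`, and a `j` with `s pⱼ = 0` gives
`w = gⱼ pⱼ = gⱼ s pⱼ = 0`. But `w ≠ 0`, as the action of `L` on `Lw` shows.
-/

/-- Generators of the Leavitt path algebra of the Toeplitz graph: the vertices
`v`, `w`, the edges `c` (a loop at `v`), `f` (from `v` to `w`), and the ghost edges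
`cs = c*`, `fs = f*`. -/
inductive TG : Type
  | v | w | c | f | cs | fs

open FreeAlgebra in
/-- The defining relations of the Leavitt path algebra of the Toeplitz graph
(`E⁰ = {v, w}`, `E¹ = {c, f}`, `s(c) = r(c) = s(f) = v`, `r(f) = w`). -/
inductive TRel (K : Type*) [Field K] : FreeAlgebra K TG → FreeAlgebra K TG → Prop
  | vv : TRel K (ι K TG.v * ι K TG.v) (ι K TG.v)
  | ww : TRel K (ι K TG.w * ι K TG.w) (ι K TG.w)
  | vw : TRel K (ι K TG.v * ι K TG.w) 0
  | wv : TRel K (ι K TG.w * ι K TG.v) 0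
  | sc : TRel K (ι K TG.v * ι K TG.c) (ι K TG.c)
  | rc : TRel K (ι K TG.c * ι K TG.v) (ι K TG.c)
  | sf : TRel K (ι K TG.v * ι K TG.f) (ι K TG.f)
  | rf : TRel K (ι K TG.f * ι K TG.w) (ι K TG.f)
  | rcs : TRel K (ι K TG.v * ι K TG.cs) (ι K TG.cs)
  | scs : TRel K (ι K TG.cs * ι K TG.v) (ι K TG.cs)
  | rfs : TRel K (ι K TG.w * ι K TG.fs) (ι K TG.fs)
  | sfs : TRel K (ι K TG.fs * ι K TG.v) (ι K TG.fs)
  | ck1cc : TRel K (ι K TG.cs * ι K TG.c) (ι K TG.v)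
  | ck1ff : TRel K (ι K TG.fs * ι K TG.f) (ι K TG.w)
  | ck1cf : TRel K (ι K TG.cs * ι K TG.f) 0
  | ck1fc : TRel K (ι K TG.fs * ι K TG.c) 0
  | ck2v : TRel K (ι K TG.v) (ι K TG.c * ι K TG.cs + ι K TG.f * ι K TG.fs)

/-- The Leavitt path algebra of the Toeplitz graph over `K`: the free algebra on the
generators modulo the Leavitt relations. -/
abbrev ToeplitzL (K : Type*) [Field K] : Type _ := RingQuot (TRel K)

variable (K : Type*) [Field K]

/-- The image of a generator in the Toeplitz Leavitt path algebra. -/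
noncomputable def Tgen (x : TG) : ToeplitzL K :=
  RingQuot.mkAlgHom K (TRel K) (FreeAlgebra.ι K x)

/-- The generators `w, wf*, wf*c*, wf*(c*)², …` of the simple left ideals whose
direct sum is the socle `S = ⟨w⟩`. -/
noncomputable def TsocGen : ℕ → ToeplitzL K
  | 0 => Tgen K TG.w
  | n + 1 => Tgen K TG.w * Tgen K TG.fs * (Tgen K TG.cs) ^ n

/-- The left ideals `Lw` and `L·(wf*(c*)^n)`. -/
noncomputable def TsocComp (n : ℕ) : Submodule (ToeplitzL K) (ToeplitzL K) :=
  Submodule.span (ToeplitzL K) {TsocGen K n}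

section DualFamily

open Submodule

variable {ι R : Type*} [Ring R] {g h : ι → R} {e : R}

theorem mul_eq_zero_of_mem_iSup_span_singleton (h_off : ∀ i j, i ≠ j → g i * h j = 0)
    {p : ι → Prop} {i : ι} (hi : ¬ p i) {x : R}
    (hx : x ∈ ⨆ (j) (_ : p j), span R {g j}) : x * h i = 0 := by
  suffices (⨆ (j) (_ : p j), span R {g j}) ≤ LinearMap.ker (LinearMap.toSpanSingleton R R (h i))
    from this hx
  refine iSup₂_le fun j hj => (span_singleton_le_iff_mem _ _).mpr ?_
  exact h_off j i fun hji => hi (hji ▸ hj)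

theorem eventually_mul_eq_zero_of_mem_iSup_span_singleton
    (h_off : ∀ i j, i ≠ j → g i * h j = 0) {x : R} (hx : x ∈ ⨆ i, span R {g i}) :
    ∀ᶠ i in Filter.cofinite, x * h i = 0 := by
  obtain ⟨s, hs⟩ := mem_iSup_iff_exists_finset.mp hx
  filter_upwards [s.eventually_cofinite_notMem] with i hi
  exact mul_eq_zero_of_mem_iSup_span_singleton h_off hi hs

theorem iSupIndep_span_singleton_of_mul_eq (h_diag : ∀ i, g i * h i = e)
    (h_off : ∀ i j, i ≠ j → g i * h j = 0) (h_unit : ∀ i, e * g i = g i) :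
    iSupIndep fun i => span R {g i} := by
  refine fun i => disjoint_def.mpr fun x hx hx' => ?_
  obtain ⟨a, rfl⟩ := mem_span_singleton.mp hx
  have hxh : a • g i * h i = 0 :=
    mul_eq_zero_of_mem_iSup_span_singleton h_off (p := (· ≠ i)) (not_not.mpr rfl) hx'
  calc a • g i = a • g i * h i * g i := by rw [smul_mul_assoc, smul_mul_assoc, h_diag, h_unit]
    _ = 0 := by rw [hxh, zero_mul]

variable {𝕜 : Type*} [Field 𝕜] [Algebra 𝕜 R]

theorem exists_mul_eq_of_mem_span_range (h_diag : ∀ i, g i * h i = e)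
    (h_off : ∀ i j, i ≠ j → g i * h j = 0) {x : R} (hx : x ∈ span 𝕜 (Set.range h))
    (hx0 : x ≠ 0) : ∃ b, b * x = e := by
  obtain ⟨c, rfl⟩ := Finsupp.mem_span_range_iff_exists_finsupp.mp hx
  obtain ⟨k, hk⟩ : ∃ k, c k ≠ 0 := by
    by_contra! hc
    exact hx0 (by simp [show c = 0 from Finsupp.ext hc])
  refine ⟨(c k)⁻¹ • g k, ?_⟩
  have hgk : g k * c.sum (fun i a => a • h i) = c k • e := by
    rw [Finsupp.mul_sum, Finsupp.sum_eq_single k]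
    · rw [mul_smul_comm, h_diag]
    · intro i _ hik
      rw [mul_smul_comm, h_off k i (Ne.symm hik), smul_zero]
    · intro; rw [zero_smul, mul_zero]
  rw [smul_mul_assoc, hgk, smul_smul, inv_mul_cancel₀ hk, one_smul]

theorem eq_bot_or_eq_of_le_span_singleton (h_diag : ∀ i, g i * h i = e)
    (h_off : ∀ i j, i ≠ j → g i * h j = 0) (h_unit : ∀ i, e * g i = g i)
    (hspan : ∀ a : R, a * e ∈ span 𝕜 (Set.range h)) (i : ι) {J : Submodule R R}
    (hJ : J ≤ span R {g i}) : J = ⊥ ∨ J = span R {g i} := by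
  refine or_iff_not_imp_left.mpr fun hJ0 => le_antisymm hJ ?_
  obtain ⟨x, hxJ, hx0⟩ := exists_mem_ne_zero_of_ne_bot hJ0
  obtain ⟨a, rfl⟩ := mem_span_singleton.mp (hJ hxJ)
  have hag : a * e * g i = a • g i := by rw [mul_assoc, h_unit, smul_eq_mul]
  obtain ⟨b, hb⟩ := exists_mul_eq_of_mem_span_range h_diag h_off (hspan a)
    fun hae => hx0 (by rw [← hag, hae, zero_mul])
  rw [span_singleton_le_iff_mem, ← h_unit i, ← hb, mul_assoc, hag, ← smul_eq_mul]
  exact J.smul_mem b hxJ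

theorem TwoSidedIdeal.exists_mul_eq_self_of_isCompl {I : TwoSidedIdeal R} {T : Submodule R R}
    (hIT : IsCompl I.asIdeal T) : ∃ s ∈ I, ∀ x ∈ I, x * s = x := by
  have h1 : (1 : R) ∈ I.asIdeal ⊔ T := by rw [hIT.sup_eq_top]; exact Submodule.mem_top
  obtain ⟨s, hs, t, ht, hst⟩ := Submodule.mem_sup.mp h1
  refine ⟨s, mem_asIdeal.mp hs, fun x hx => ?_⟩
  have hxt : x * t = 0 := by
    refine disjoint_def.mp hIT.disjoint _ (mem_asIdeal.mpr ?_) (T.smul_mem x ht)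
    rw [eq_sub_of_add_eq' hst, mul_sub, mul_one]
    exact I.sub_mem hx (I.mul_mem_left x s (mem_asIdeal.mp hs))
  rw [← add_zero (x * s), ← hxt, ← mul_add, hst, mul_one]

theorem TwoSidedIdeal.not_exists_isCompl_asIdeal [Infinite ι] {I : TwoSidedIdeal R}
    (h_diag : ∀ i, g i * h i = e) (h_off : ∀ i j, i ≠ j → g i * h j = 0) (he : e ≠ 0)
    (hgI : ∀ i, g i ∈ I) (hI : I.asIdeal ≤ ⨆ i, Submodule.span R {g i}) :
    ¬ ∃ T : Submodule R R, IsCompl I.asIdeal T := by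
  rintro ⟨T, hIT⟩
  obtain ⟨s, hsI, hs⟩ := exists_mul_eq_self_of_isCompl hIT
  obtain ⟨i, hsh⟩ :=
    (eventually_mul_eq_zero_of_mem_iSup_span_singleton h_off (hI (mem_asIdeal.mpr hsI))).exists
  exact he (by rw [← h_diag i, ← hs _ (hgI i), mul_assoc, hsh, mul_zero])

end DualFamily

theorem RingQuot.mul_mem_of_forall_ι_mul_mem {S X : Type*} [CommSemiring S]
    {r : FreeAlgebra S X → FreeAlgebra S X → Prop} (p : Submodule S (RingQuot r))
    (hp : ∀ x, ∀ q ∈ p, mkAlgHom S r (FreeAlgebra.ι S x) * q ∈ p) (a : RingQuot r)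
    {q : RingQuot r} (hq : q ∈ p) : a * q ∈ p := by
  obtain ⟨a, rfl⟩ := mkAlgHom_surjective S r a
  induction a using FreeAlgebra.induction generalizing q with
  | grade0 c => rw [AlgHom.commutes, ← Algebra.smul_def]; exact p.smul_mem c hq
  | grade1 x => exact hp x q hq
  | mul a b iha ihb => rw [map_mul, mul_assoc]; exact iha (ihb hq)
  | add a b iha ihb => rw [map_add, add_mul]; exact add_mem (iha hq) (ihb hq)

theorem RingQuot.mul_mem_of_forall_mul_ι_mem {S X : Type*} [CommSemiring S]
    {r : FreeAlgebra S X → FreeAlgebra S X → Prop} (p : Submodule S (RingQuot r))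
    (hp : ∀ x, ∀ q ∈ p, q * mkAlgHom S r (FreeAlgebra.ι S x) ∈ p) (a : RingQuot r)
    {q : RingQuot r} (hq : q ∈ p) : q * a ∈ p := by
  obtain ⟨a, rfl⟩ := mkAlgHom_surjective S r a
  induction a using FreeAlgebra.induction generalizing q with
  | grade0 c =>
    rw [AlgHom.commutes, ← Algebra.commutes, ← Algebra.smul_def]
    exact p.smul_mem c hq
  | grade1 x => exact hp x q hq
  | mul a b iha ihb => rw [map_mul, ← mul_assoc]; exact ihb (iha hq)
  | add a b iha ihb => rw [map_add, mul_add]; exact add_mem (iha hq) (ihb hq)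

namespace ToeplitzL

open Submodule

variable {K}

local notation "𝐯" => Tgen K TG.v
local notation "𝐰" => Tgen K TG.w
local notation "𝐜" => Tgen K TG.c
local notation "𝐟" => Tgen K TG.f
local notation "𝐜⋆" => Tgen K TG.cs
local notation "𝐟⋆" => Tgen K TG.fs

theorem w_mul_w : 𝐰 * 𝐰 = 𝐰 := by
  simpa only [Tgen, map_mul, map_zero] using RingQuot.mkAlgHom_rel K TRel.ww
theorem v_mul_w : 𝐯 * 𝐰 = 0 := by
  simpa only [Tgen, map_mul, map_zero] using RingQuot.mkAlgHom_rel K TRel.vw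
theorem w_mul_v : 𝐰 * 𝐯 = 0 := by
  simpa only [Tgen, map_mul, map_zero] using RingQuot.mkAlgHom_rel K TRel.wv
theorem v_mul_c : 𝐯 * 𝐜 = 𝐜 := by
  simpa only [Tgen, map_mul, map_zero] using RingQuot.mkAlgHom_rel K TRel.sc
theorem c_mul_v : 𝐜 * 𝐯 = 𝐜 := by
  simpa only [Tgen, map_mul, map_zero] using RingQuot.mkAlgHom_rel K TRel.rc
theorem v_mul_f : 𝐯 * 𝐟 = 𝐟 := by
  simpa only [Tgen, map_mul, map_zero] using RingQuot.mkAlgHom_rel K TRel.sf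
theorem f_mul_w : 𝐟 * 𝐰 = 𝐟 := by
  simpa only [Tgen, map_mul, map_zero] using RingQuot.mkAlgHom_rel K TRel.rf
theorem v_mul_cs : 𝐯 * 𝐜⋆ = 𝐜⋆ := by
  simpa only [Tgen, map_mul, map_zero] using RingQuot.mkAlgHom_rel K TRel.rcs
theorem cs_mul_v : 𝐜⋆ * 𝐯 = 𝐜⋆ := by
  simpa only [Tgen, map_mul, map_zero] using RingQuot.mkAlgHom_rel K TRel.scs
theorem w_mul_fs : 𝐰 * 𝐟⋆ = 𝐟⋆ := by
  simpa only [Tgen, map_mul, map_zero] using RingQuot.mkAlgHom_rel K TRel.rfs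
theorem fs_mul_v : 𝐟⋆ * 𝐯 = 𝐟⋆ := by
  simpa only [Tgen, map_mul, map_zero] using RingQuot.mkAlgHom_rel K TRel.sfs
theorem cs_mul_c : 𝐜⋆ * 𝐜 = 𝐯 := by
  simpa only [Tgen, map_mul, map_zero] using RingQuot.mkAlgHom_rel K TRel.ck1cc
theorem fs_mul_f : 𝐟⋆ * 𝐟 = 𝐰 := by
  simpa only [Tgen, map_mul, map_zero] using RingQuot.mkAlgHom_rel K TRel.ck1ff
theorem cs_mul_f : 𝐜⋆ * 𝐟 = 0 := by
  simpa only [Tgen, map_mul, map_zero] using RingQuot.mkAlgHom_rel K TRel.ck1cf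
theorem fs_mul_c : 𝐟⋆ * 𝐜 = 0 := by
  simpa only [Tgen, map_mul, map_zero] using RingQuot.mkAlgHom_rel K TRel.ck1fc

theorem f_mul_v : 𝐟 * 𝐯 = 0 := by rw [← f_mul_w, mul_assoc, w_mul_v, mul_zero]
theorem v_mul_fs : 𝐯 * 𝐟⋆ = 0 := by rw [← w_mul_fs, ← mul_assoc, v_mul_w, zero_mul]

theorem mul_w_eq_zero {a : ToeplitzL K} (ha : a * 𝐯 = a) : a * 𝐰 = 0 := by
  rw [← ha, mul_assoc, v_mul_w, mul_zero]

theorem w_mul_eq_zero {a : ToeplitzL K} (ha : 𝐯 * a = a) : 𝐰 * a = 0 := by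
  rw [← ha, ← mul_assoc, w_mul_v, zero_mul]

theorem c_mul_w : 𝐜 * 𝐰 = 0 := mul_w_eq_zero c_mul_v
theorem cs_mul_w : 𝐜⋆ * 𝐰 = 0 := mul_w_eq_zero cs_mul_v
theorem fs_mul_w : 𝐟⋆ * 𝐰 = 0 := mul_w_eq_zero fs_mul_v

variable (K) in
/-- The paths `w, f, cf, c²f, …` ending at `w`; `TsocGen K n` is the ghost path
`(wPath K n)*`. -/
noncomputable def wPath : ℕ → ToeplitzL K
  | 0 => 𝐰
  | n + 1 => 𝐜 ^ n * 𝐟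

theorem wPath_zero : wPath K 0 = 𝐰 := rfl

theorem wPath_one : wPath K 1 = 𝐟 := by simp [wPath]

theorem wPath_succ_succ (n : ℕ) : wPath K (n + 2) = 𝐜 * wPath K (n + 1) := by
  simp only [wPath, pow_succ', mul_assoc]

theorem v_mul_wPath_succ (n : ℕ) : 𝐯 * wPath K (n + 1) = wPath K (n + 1) := by
  cases n with
  | zero => rw [wPath_one, v_mul_f]
  | succ n => rw [wPath_succ_succ, ← mul_assoc, v_mul_c]

theorem mul_wPath_succ_eq_zero {a : ToeplitzL K} (ha : a * 𝐯 = 0) (n : ℕ) :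
    a * wPath K (n + 1) = 0 := by
  rw [← v_mul_wPath_succ, ← mul_assoc, ha, zero_mul]

theorem w_mul_wPath_succ (n : ℕ) : 𝐰 * wPath K (n + 1) = 0 := mul_wPath_succ_eq_zero w_mul_v n

theorem f_mul_wPath_succ (n : ℕ) : 𝐟 * wPath K (n + 1) = 0 := mul_wPath_succ_eq_zero f_mul_v n

theorem cs_mul_wPath_one : 𝐜⋆ * wPath K 1 = 0 := by rw [wPath_one, cs_mul_f]

theorem fs_mul_wPath_one : 𝐟⋆ * wPath K 1 = 𝐰 := by rw [wPath_one, fs_mul_f]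

theorem cs_mul_wPath_succ_succ (n : ℕ) : 𝐜⋆ * wPath K (n + 2) = wPath K (n + 1) := by
  rw [wPath_succ_succ, ← mul_assoc, cs_mul_c, v_mul_wPath_succ]

theorem fs_mul_wPath_succ_succ (n : ℕ) : 𝐟⋆ * wPath K (n + 2) = 0 := by
  rw [wPath_succ_succ, ← mul_assoc, fs_mul_c, zero_mul]

theorem TsocGen_one : TsocGen K 1 = 𝐰 * 𝐟⋆ := by simp [TsocGen]

theorem TsocGen_succ_succ (n : ℕ) : TsocGen K (n + 2) = TsocGen K (n + 1) * 𝐜⋆ := by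
  simp only [TsocGen, pow_succ, mul_assoc]

theorem TsocGen_succ_mul_v (n : ℕ) : TsocGen K (n + 1) * 𝐯 = TsocGen K (n + 1) := by
  cases n with
  | zero => rw [TsocGen_one, mul_assoc, fs_mul_v]
  | succ n => rw [TsocGen_succ_succ, mul_assoc, cs_mul_v]

theorem TsocGen_mul_wPath :
    ∀ k i : ℕ, TsocGen K k * wPath K i = if k = i then 𝐰 else 0
  | 0, 0 => w_mul_w
  | 0, i + 1 => w_mul_wPath_succ i
  | k + 1, 0 => mul_w_eq_zero (TsocGen_succ_mul_v k)
  | 1, 1 => by rw [TsocGen_one, mul_assoc, fs_mul_wPath_one, w_mul_w, if_pos rfl]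
  | 1, i + 2 => by rw [TsocGen_one, mul_assoc, fs_mul_wPath_succ_succ, mul_zero, if_neg (by omega)]
  | k + 2, 1 => by rw [TsocGen_succ_succ, mul_assoc, cs_mul_wPath_one, mul_zero, if_neg (by omega)]
  | k + 2, i + 2 => by
    rw [TsocGen_succ_succ, mul_assoc, cs_mul_wPath_succ_succ, TsocGen_mul_wPath (k + 1) (i + 1)]
    simp

variable (K) in
/-- The coordinates of `Tgen K x * wPath K n` in the paths `wPath K`. -/
noncomputable def pathCoord : TG → ℕ → ℕ →₀ K
  | .v, 0 => 0
  | .v, n + 1 => Finsupp.single (n + 1) 1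
  | .w, 0 => Finsupp.single 0 1
  | .w, _ + 1 => 0
  | .c, 0 => 0
  | .c, n + 1 => Finsupp.single (n + 2) 1
  | .f, 0 => Finsupp.single 1 1
  | .f, _ + 1 => 0
  | .cs, n + 2 => Finsupp.single (n + 1) 1
  | .cs, _ => 0
  | .fs, 1 => Finsupp.single 0 1
  | .fs, _ => 0

theorem Tgen_mul_wPath (x : TG) (n : ℕ) :
    Tgen K x * wPath K n = Finsupp.linearCombination K (wPath K) (pathCoord K x n) := by
  cases x <;> rcases n with _ | _ | n <;>
    simp [pathCoord, wPath_zero, ← wPath_succ_succ, v_mul_w, w_mul_w, c_mul_w,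
      f_mul_w.trans wPath_one.symm, cs_mul_w, fs_mul_w, v_mul_wPath_succ, w_mul_wPath_succ,
      f_mul_wPath_succ, cs_mul_wPath_one, fs_mul_wPath_one, cs_mul_wPath_succ_succ,
      fs_mul_wPath_succ_succ]

variable (K) in
noncomputable def pathRep : ToeplitzL K →ₐ[K] Module.End K (ℕ →₀ K) :=
  RingQuot.liftAlgHom K ⟨FreeAlgebra.lift K fun x => Finsupp.linearCombination K (pathCoord K x),
    fun {a b} h => by
      cases h <;>
      · simp only [map_mul, map_add, map_zero, FreeAlgebra.lift_ι_apply]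
        refine Finsupp.lhom_ext fun n a => ?_
        rcases n with _ | _ | n <;> simp [Module.End.mul_apply, pathCoord]⟩

theorem w_ne_zero : 𝐰 ≠ 0 := by
  intro hw
  have h := LinearMap.congr_fun (congrArg (pathRep K) hw) (Finsupp.single 0 1)
  simp [pathRep, Tgen, pathCoord] at h

theorem TsocGen_mul_wPath_self (i : ℕ) : TsocGen K i * wPath K i = 𝐰 := by
  simp [TsocGen_mul_wPath]

theorem TsocGen_mul_wPath_of_ne (i j : ℕ) (h : i ≠ j) : TsocGen K i * wPath K j = 0 := by
  simp [TsocGen_mul_wPath, h]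

theorem w_mul_TsocGen (n : ℕ) : 𝐰 * TsocGen K n = TsocGen K n := by
  cases n with
  | zero => exact w_mul_w
  | succ n => simp only [TsocGen, ← mul_assoc, w_mul_w]

theorem mul_w_mem_span_wPath (a : ToeplitzL K) : a * 𝐰 ∈ span K (Set.range (wPath K)) := by
  refine RingQuot.mul_mem_of_forall_ι_mul_mem _ (fun x q hq => ?_) a (subset_span ⟨0, rfl⟩)
  refine (map_span_le (LinearMap.mulLeft K (Tgen K x)) _ _).mpr ?_ (mem_map_of_mem hq)
  rintro _ ⟨n, rfl⟩
  rw [LinearMap.mulLeft_apply, Tgen_mul_wPath, ← Finsupp.range_linearCombination]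
  exact LinearMap.mem_range_self _ _

theorem TsocGen_mem_span_w (n : ℕ) : TsocGen K n ∈ TwoSidedIdeal.span {𝐰} := by
  rw [← w_mul_TsocGen]
  exact TwoSidedIdeal.mul_mem_right _ _ _ (TwoSidedIdeal.subset_span rfl)

theorem TsocGen_succ_mul_w (n : ℕ) : TsocGen K (n + 1) * 𝐰 = 0 :=
  mul_w_eq_zero (TsocGen_succ_mul_v n)

theorem TsocGen_succ_mul_fs (n : ℕ) : TsocGen K (n + 1) * 𝐟⋆ = 0 := by
  rw [← TsocGen_succ_mul_v, mul_assoc, v_mul_fs, mul_zero]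

theorem TsocGen_one_mul_c : TsocGen K 1 * 𝐜 = 0 := by
  rw [TsocGen_one, mul_assoc, fs_mul_c, mul_zero]

theorem TsocGen_succ_succ_mul_c (n : ℕ) : TsocGen K (n + 2) * 𝐜 = TsocGen K (n + 1) := by
  rw [TsocGen_succ_succ, mul_assoc, cs_mul_c, TsocGen_succ_mul_v]

theorem TsocGen_one_mul_f : TsocGen K 1 * 𝐟 = TsocGen K 0 := by
  rw [TsocGen_one, mul_assoc, fs_mul_f, w_mul_w, TsocGen]

theorem TsocGen_succ_succ_mul_f (n : ℕ) : TsocGen K (n + 2) * 𝐟 = 0 := by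
  rw [TsocGen_succ_succ, mul_assoc, cs_mul_f, mul_zero]

theorem TsocGen_mem_iSup (n : ℕ) : TsocGen K n ∈ ⨆ m, TsocComp K m :=
  mem_iSup_of_mem n (mem_span_singleton_self _)

theorem TsocGen_mul_Tgen_mem_iSup (n : ℕ) (x : TG) :
    TsocGen K n * Tgen K x ∈ ⨆ m, TsocComp K m := by
  have zero_mul_v : TsocGen K 0 * 𝐯 = 0 := w_mul_v
  have zero_mul_w : TsocGen K 0 * 𝐰 = TsocGen K 0 := w_mul_w
  have zero_mul_fs : TsocGen K 0 * 𝐟⋆ = TsocGen K 1 := TsocGen_one.symm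
  have zero_mul_of_v_mul {a : ToeplitzL K} (ha : 𝐯 * a = a) : TsocGen K 0 * a = 0 :=
    w_mul_eq_zero ha
  cases x <;> rcases n with _ | _ | n <;>
    simp [TsocGen_mem_iSup, zero_mul_v, zero_mul_w, zero_mul_fs, zero_mul_of_v_mul, v_mul_c,
      v_mul_f, v_mul_cs, TsocGen_succ_mul_v, TsocGen_succ_mul_w, ← TsocGen_succ_succ,
      TsocGen_succ_mul_fs, TsocGen_one_mul_c, TsocGen_succ_succ_mul_c, TsocGen_one_mul_f,
      TsocGen_succ_succ_mul_f]

instance isTwoSided_iSup_TsocComp : Ideal.IsTwoSided (⨆ m, TsocComp K m) where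
  mul_mem_of_left b hx := by
    refine (restrictScalars_mem K _ _).mp
      (RingQuot.mul_mem_of_forall_mul_ι_mem _ (fun x q hq => ?_) b hx)
    have hle : ⨆ m, TsocComp K m ≤
        (⨆ m, TsocComp K m).comap (LinearMap.toSpanSingleton _ _ (Tgen K x)) :=
      iSup_le fun n => (span_singleton_le_iff_mem _ _).mpr (TsocGen_mul_Tgen_mem_iSup n x)
    exact hle hq

theorem asIdeal_span_w_eq_iSup_TsocComp :
    (TwoSidedIdeal.span {𝐰}).asIdeal = ⨆ n, TsocComp K n := by
  refine le_antisymm ?_ (iSup_le fun n => ?_)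
  · rw [← Ideal.asIdeal_toTwoSided (⨆ n, TsocComp K n)]
    refine TwoSidedIdeal.asIdeal.monotone (TwoSidedIdeal.span_le.mpr ?_)
    rw [Set.singleton_subset_iff, SetLike.mem_coe, Ideal.mem_toTwoSided]
    exact TsocGen_mem_iSup 0
  · exact (span_singleton_le_iff_mem _ _).mpr
      (TwoSidedIdeal.mem_asIdeal.mpr (TsocGen_mem_span_w n))

end ToeplitzL

theorem toeplitz_socle_not_direct_summand :
    (TwoSidedIdeal.asIdeal (TwoSidedIdeal.span {Tgen K TG.w}) = ⨆ n, TsocComp K n) ∧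
    iSupIndep (TsocComp K) ∧
    (∀ n : ℕ, TsocComp K n ≠ ⊥ ∧
      ∀ J : Submodule (ToeplitzL K) (ToeplitzL K),
        J ≤ TsocComp K n → J = ⊥ ∨ J = TsocComp K n) ∧
    ¬ ∃ T : Submodule (ToeplitzL K) (ToeplitzL K),
        IsCompl (TwoSidedIdeal.asIdeal (TwoSidedIdeal.span {Tgen K TG.w})) T := by
  open ToeplitzL in
  have h_diag := TsocGen_mul_wPath_self (K := K)
  have h_off := TsocGen_mul_wPath_of_ne (K := K)
  refine ⟨asIdeal_span_w_eq_iSup_TsocComp,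
    iSupIndep_span_singleton_of_mul_eq h_diag h_off w_mul_TsocGen,
    fun n => ⟨?_, fun J => eq_bot_or_eq_of_le_span_singleton h_diag h_off w_mul_TsocGen
      mul_w_mem_span_wPath n⟩,
    TwoSidedIdeal.not_exists_isCompl_asIdeal h_diag h_off w_ne_zero TsocGen_mem_span_w
      asIdeal_span_w_eq_iSup_TsocComp.le⟩
  exact Submodule.span_singleton_eq_bot.not.mpr fun h0 => w_ne_zero (by rw [← h_diag n, h0, zero_mul])
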